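/- There exists an absolute constant C > 0 such that for all integers k, l, all reals ξ, η, and all real t: |(k² − l²)/⟨t⟩² + (|ξ| − |η|)/⟨t⟩²| ≤ C · ⟨k−l, ξ−η⟩² · (1 + (k² + |ξ|)/⟨t⟩²)^{1/2} · ⟨t⟩^{−1}. -/

import Mathlib

/-- Japanese bracket `⟨a⟩ = (1 + a²)^{1/2}` of a real number. -/
noncomputable def jb (a : ℝ) : ℝ := Real.sqrt (1 + a ^ 2)

/-- Double Japanese bracket `⟨m,ζ⟩ = (1 + m² + ζ²)^{1/2}`. -/
noncomputable def jb2 (m : ℤ) (ζ : ℝ) : ℝ := Real.sqrt (1 + (m : ℝ) ^ 2 + ζ ^ 2)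

theorem stmt9 : ∃ C : ℝ, 0 < C ∧ ∀ (k l : ℤ) (ξ η t : ℝ),
    |((k : ℝ) ^ 2 - (l : ℝ) ^ 2) / (jb t) ^ 2 + (|ξ| - |η|) / (jb t) ^ 2| ≤
      C * (jb2 (k - l) (ξ - η)) ^ 2 *
        Real.sqrt (1 + ((k : ℝ) ^ 2 + |ξ|) / (jb t) ^ 2) * (jb t)⁻¹ := by
  refine ⟨4, by norm_num, fun k l ξ η t => ?_⟩
  set J := jb t with hJdef
  set D := jb2 (k - l) (ξ - η) with hDdef
  set S := Real.sqrt (1 + ((k : ℝ) ^ 2 + |ξ|) / J ^ 2) with hSdef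
  have hJ1 : 1 ≤ J := by
    rw [hJdef, jb]
    nlinarith [Real.sq_sqrt (by positivity : (0:ℝ) ≤ 1 + t ^ 2),
      Real.sqrt_nonneg (1 + t ^ 2), sq_nonneg t]
  have hJ0 : 0 < J := lt_of_lt_of_le one_pos hJ1
  have hJsq : J ^ 2 = 1 + t ^ 2 := Real.sq_sqrt (by positivity)
  have hDsq : D ^ 2 = 1 + ((k : ℝ) - l) ^ 2 + (ξ - η) ^ 2 := by
    rw [hDdef, jb2, Real.sq_sqrt (by positivity)]
    push_cast
    ring
  have hD0 : 0 ≤ D := Real.sqrt_nonneg _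
  have hD1 : 1 ≤ D := by
    nlinarith [sq_nonneg (((k : ℝ) - l)), sq_nonneg (ξ - η)]
  have hS0 : 0 ≤ S := Real.sqrt_nonneg _
  have hSsq : (J * S) ^ 2 = J ^ 2 + (k : ℝ) ^ 2 + |ξ| := by
    have : S ^ 2 = 1 + ((k : ℝ) ^ 2 + |ξ|) / J ^ 2 :=
      Real.sq_sqrt (by positivity)
    field_simp [mul_pow, this]
    rw [this, mul_add, mul_one, mul_div_assoc', mul_div_cancel_left₀ _ (by positivity : J ^ 2 ≠ 0)]
    ring
  -- key: 1 + |k| ≤ 2 * (J * S)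
  have hkey : 1 + |(k : ℝ)| ≤ 2 * (J * S) := by
    have h1 : (1 + |(k : ℝ)|) ^ 2 ≤ (2 * (J * S)) ^ 2 := by
      have hk2 : |(k : ℝ)| ^ 2 = (k : ℝ) ^ 2 := sq_abs _
      nlinarith [abs_nonneg (k : ℝ), abs_nonneg ξ, sq_nonneg (1 - |(k : ℝ)|)]
    have h2 : 0 ≤ 2 * (J * S) := by positivity
    calc 1 + |(k : ℝ)| = Real.sqrt ((1 + |(k : ℝ)|) ^ 2) := by
          rw [Real.sqrt_sq (by positivity)]
      _ ≤ Real.sqrt ((2 * (J * S)) ^ 2) := Real.sqrt_le_sqrt h1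
      _ = 2 * (J * S) := Real.sqrt_sq h2
  -- bound on the numerator
  have hkl : |(k : ℝ) - l| ≤ D := by
    have := abs_nonneg ((k : ℝ) - l)
    nlinarith [sq_abs ((k : ℝ) - l), sq_nonneg (ξ - η)]
  have hxe : |ξ - η| ≤ D := by
    have := abs_nonneg (ξ - η)
    nlinarith [sq_abs (ξ - η), sq_nonneg ((k : ℝ) - l)]
  have hnum : |((k : ℝ) ^ 2 - (l : ℝ) ^ 2) + (|ξ| - |η|)| ≤ 4 * D ^ 2 * S * J := by
    have hA : |(k : ℝ) ^ 2 - (l : ℝ) ^ 2| ≤ D * (D + 2 * |(k : ℝ)|) := by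
      have : (k : ℝ) ^ 2 - (l : ℝ) ^ 2 = ((k : ℝ) - l) * ((k : ℝ) + l) := by ring
      rw [this, abs_mul]
      have hsum : |(k : ℝ) + l| ≤ |(k : ℝ) - l| + 2 * |(k : ℝ)| := by
        have : (k : ℝ) + l = 2 * (k : ℝ) - ((k : ℝ) - l) := by ring
        rw [this]
        calc |2 * (k : ℝ) - ((k : ℝ) - l)| ≤ |2 * (k : ℝ)| + |(k : ℝ) - l| :=
              abs_sub _ _
          _ = |(k : ℝ) - l| + 2 * |(k : ℝ)| := by rw [abs_mul]; norm_num; ring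
      calc |(k : ℝ) - l| * |(k : ℝ) + l|
          ≤ D * (|(k : ℝ) - l| + 2 * |(k : ℝ)|) := by
            apply mul_le_mul hkl hsum (abs_nonneg _) (by linarith)
        _ ≤ D * (D + 2 * |(k : ℝ)|) := by
            apply mul_le_mul_of_nonneg_left _ (by linarith)
            linarith
    have hB : |(|ξ| - |η|)| ≤ D := le_trans (abs_abs_sub_abs_le_abs_sub _ _) hxe
    calc |((k : ℝ) ^ 2 - (l : ℝ) ^ 2) + (|ξ| - |η|)|
        ≤ |(k : ℝ) ^ 2 - (l : ℝ) ^ 2| + |(|ξ| - |η|)| := abs_add_le _ _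
      _ ≤ D * (D + 2 * |(k : ℝ)|) + D := by linarith
      _ ≤ 2 * D ^ 2 * (1 + |(k : ℝ)|) := by
          nlinarith [mul_nonneg (mul_nonneg hD0 (abs_nonneg (k : ℝ)))
            (sub_nonneg.mpr hD1), mul_nonneg hD0 (sub_nonneg.mpr hD1)]
      _ ≤ 2 * D ^ 2 * (2 * (J * S)) := by
          apply mul_le_mul_of_nonneg_left hkey (by positivity)
      _ = 4 * D ^ 2 * S * J := by ring
  have hJ2 : (0 : ℝ) < J ^ 2 := by positivity
  calc |((k : ℝ) ^ 2 - (l : ℝ) ^ 2) / J ^ 2 + (|ξ| - |η|) / J ^ 2|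
      = |((k : ℝ) ^ 2 - (l : ℝ) ^ 2) + (|ξ| - |η|)| / J ^ 2 := by
        rw [← add_div, abs_div, abs_of_pos hJ2]
    _ ≤ (4 * D ^ 2 * S * J) / J ^ 2 := by gcongr
    _ = 4 * D ^ 2 * S * J⁻¹ := by
        field_simp
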